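/- Fix N, D ∈ ℕ, γ > 0, σ ∈ ℝ, M ∈ ℝ^{N×N}, W_in ∈ ℝ^{N×D}, W¹, W² ∈ ℝ^{D×N}, b ∈ ℝ^N, and define G(r) = γ(−r + tanh(M r + σ W_in (W¹ r + W² r²) + b)) for r ∈ ℝ^N, where tanh acts componentwise and r² denotes the componentwise square. Let r : ℝ → ℝ^N be differentiable with ṙ(t) = G(r(t)) for all t ∈ ℝ, and suppose its image is bounded, i.e. sup_{t∈ℝ} ‖r(t)‖_∞ < ∞. Then |r_i(t)| < 1 for every coordinate i and every t ∈ ℝ. Consequently every bounded entire solution — in particular any trajectory on a reconstructed attractor or on an untrained attractor — lies in the open cube (−1,1)^N. -/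

import Mathlib

open Matrix

lemma my_abs_tanh_lt_one (x : ℝ) : |Real.tanh x| < 1 := by
  have hc : 0 < Real.cosh x := Real.cosh_pos x
  rw [Real.tanh_eq_sinh_div_cosh, abs_div, abs_of_pos hc, div_lt_one hc, abs_lt]
  rw [Real.sinh_eq, Real.cosh_eq]
  constructor <;> nlinarith [Real.exp_pos x, Real.exp_pos (-x)]

lemma my_continuous_tanh : Continuous Real.tanh := by
  have : Real.tanh = fun x => Real.sinh x / Real.cosh x := funext Real.tanh_eq_sinh_div_cosh
  rw [this]
  exact Real.continuous_sinh.div Real.continuous_cosh fun x => (Real.cosh_pos x).ne'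

/-- Grönwall-type bound for `u' = γ(−u + h)` with `|h| ≤ m` on `[s, t]`. -/
lemma key_bound (γ : ℝ) (hγ : 0 < γ) (u h : ℝ → ℝ)
    (hu : ∀ t, HasDerivAt u (γ * (-u t + h t)) t)
    (hh : Continuous h) (s t : ℝ) (hst : s ≤ t) (m : ℝ)
    (hm : ∀ τ ∈ Set.Icc s t, |h τ| ≤ m) :
    |u t| ≤ Real.exp (γ * (s - t)) * |u s| + m * (1 - Real.exp (γ * (s - t))) := by
  have hucont : Continuous u := by
    rw [continuous_iff_continuousAt]; exact fun x => (hu x).continuousAt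
  set v : ℝ → ℝ := fun τ => Real.exp (γ * τ) * u τ with hv
  have heexp : ∀ τ : ℝ, HasDerivAt (fun τ : ℝ => Real.exp (γ * τ)) (Real.exp (γ * τ) * γ) τ := by
    intro τ
    simpa using ((hasDerivAt_id τ).const_mul γ).exp
  have hvderiv : ∀ τ, HasDerivAt v (γ * Real.exp (γ * τ) * h τ) τ := by
    intro τ
    have := (heexp τ).mul (hu τ)
    refine this.congr_deriv ?_
    ring
  have hFcont : Continuous fun τ => γ * Real.exp (γ * τ) * h τ := by continuity
  have hGcont : Continuous fun τ => γ * Real.exp (γ * τ) := by continuity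
  have hftc : ∫ τ in s..t, γ * Real.exp (γ * τ) * h τ = v t - v s :=
    intervalIntegral.integral_eq_sub_of_hasDerivAt (fun τ _ => hvderiv τ)
      (hFcont.intervalIntegrable s t)
  have hftc2 : ∫ τ in s..t, γ * Real.exp (γ * τ) = Real.exp (γ * t) - Real.exp (γ * s) := by
    apply intervalIntegral.integral_eq_sub_of_hasDerivAt
      (fun τ _ => by simpa [mul_comm] using heexp τ)
      (hGcont.intervalIntegrable s t)
  have hbound : |v t - v s| ≤ m * (Real.exp (γ * t) - Real.exp (γ * s)) := by
    rw [← hftc]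
    calc |∫ τ in s..t, γ * Real.exp (γ * τ) * h τ|
        ≤ ∫ τ in s..t, |γ * Real.exp (γ * τ) * h τ| :=
          intervalIntegral.abs_integral_le_integral_abs hst
      _ ≤ ∫ τ in s..t, γ * Real.exp (γ * τ) * m := by
          apply intervalIntegral.integral_mono_on hst
            (hFcont.abs.intervalIntegrable s t)
            ((hGcont.mul continuous_const).intervalIntegrable s t)
          intro τ hτ
          rw [abs_mul, abs_of_nonneg (by positivity : (0:ℝ) ≤ γ * Real.exp (γ * τ))]
          exact mul_le_mul_of_nonneg_left (hm τ hτ) (by positivity)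
      _ = m * (Real.exp (γ * t) - Real.exp (γ * s)) := by
          rw [intervalIntegral.integral_mul_const, hftc2]; ring
  have hvt : |v t| ≤ Real.exp (γ * s) * |u s| + m * (Real.exp (γ * t) - Real.exp (γ * s)) := by
    have h1 := abs_sub_abs_le_abs_sub (v t) (v s)
    have h2 : |v s| = Real.exp (γ * s) * |u s| := by
      simp [hv, abs_mul, abs_of_pos (Real.exp_pos _)]
    linarith
  have hut : |u t| = Real.exp (-(γ * t)) * |v t| := by
    simp only [hv, abs_mul, abs_of_pos (Real.exp_pos _)]
    rw [← mul_assoc, ← Real.exp_add]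
    simp
  have e1 : Real.exp (-(γ * t)) * Real.exp (γ * s) = Real.exp (γ * (s - t)) := by
    rw [← Real.exp_add]; ring_nf
  have e2 : Real.exp (-(γ * t)) * Real.exp (γ * t) = 1 := by
    rw [← Real.exp_add]; simp
  rw [hut]
  calc Real.exp (-(γ * t)) * |v t|
      ≤ Real.exp (-(γ * t)) * (Real.exp (γ * s) * |u s| + m * (Real.exp (γ * t) - Real.exp (γ * s))) :=
        mul_le_mul_of_nonneg_left hvt (Real.exp_pos _).le
    _ = Real.exp (γ * (s - t)) * |u s| + m * (1 - Real.exp (γ * (s - t))) := by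
        linear_combination (|u s| - m) * e1 + m * e2

/-- The closed-loop reservoir vector field
`G(r) = γ(−r + tanh(M r + σ W_in (W¹ r + W² r²) + b))`,
with `tanh` acting componentwise and `r²` the componentwise square. -/
noncomputable def closedLoopField (N D : ℕ) (γ σ : ℝ)
    (M : Matrix (Fin N) (Fin N) ℝ) (Win : Matrix (Fin N) (Fin D) ℝ)
    (W₁ W₂ : Matrix (Fin D) (Fin N) ℝ) (b : Fin N → ℝ) (r : Fin N → ℝ) : Fin N → ℝ :=
  γ • (-r + fun i =>
    Real.tanh ((M *ᵥ r + σ • (Win *ᵥ (W₁ *ᵥ r + W₂ *ᵥ fun j => (r j) ^ 2)) + b) i))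

/-- Every bounded entire solution of the closed-loop reservoir computer lies in the
open cube `(−1,1)^N`: if `ṙ(t) = G(r(t))` for all `t ∈ ℝ` and
`sup_{t∈ℝ} ‖r(t)‖_∞ < ∞`, then `|r_i(t)| < 1` for all `i` and all `t`.
(The norm on `Fin N → ℝ` is the supremum norm.) -/
theorem stmt_14 (N D : ℕ) (γ : ℝ) (hγ : 0 < γ) (σ : ℝ)
    (M : Matrix (Fin N) (Fin N) ℝ) (Win : Matrix (Fin N) (Fin D) ℝ)
    (W₁ W₂ : Matrix (Fin D) (Fin N) ℝ) (b : Fin N → ℝ)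
    (r : ℝ → Fin N → ℝ)
    (hr : ∀ t : ℝ, HasDerivAt r (closedLoopField N D γ σ M Win W₁ W₂ b (r t)) t)
    (hbdd : ∃ C : ℝ, ∀ t : ℝ, ‖r t‖ ≤ C) :
    ∀ (t : ℝ) (i : Fin N), |r t i| < 1 := by
  obtain ⟨C, hC⟩ := hbdd
  set g : ℝ → Fin N → ℝ := fun t i =>
    Real.tanh ((M *ᵥ r t + σ • (Win *ᵥ (W₁ *ᵥ r t + W₂ *ᵥ fun j => (r t j) ^ 2)) + b) i)
    with hg
  have hrc : Continuous r := continuous_iff_continuousAt.mpr fun t => (hr t).continuousAt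
  have hrci : ∀ j, Continuous fun τ => r τ j := fun j => (continuous_apply j).comp hrc
  have hgc : ∀ i, Continuous fun τ => g τ i := by
    intro i
    simp only [hg, Matrix.mulVec, dotProduct, Pi.add_apply, Pi.smul_apply, smul_eq_mul]
    exact my_continuous_tanh.comp (by fun_prop)
  have hglt : ∀ t i, |g t i| < 1 := fun t i => my_abs_tanh_lt_one _
  have hu : ∀ i t, HasDerivAt (fun t => r t i) (γ * (-(r t i) + g t i)) t := by
    intro i t
    have := (hasDerivAt_pi.mp (hr t)) i
    simpa [closedLoopField, hg, Pi.smul_apply, Pi.add_apply, Pi.neg_apply, smul_eq_mul]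
      using this
  -- Step 1: |r t i| ≤ 1 for all t, i
  have step1 : ∀ t i, |r t i| ≤ 1 := by
    intro t i
    have hbd : ∀ s ≤ t, |r t i| ≤ 1 + Real.exp (γ * (s - t)) * (C - 1) := by
      intro s hs
      have h := key_bound γ hγ (fun t => r t i) (fun t => g t i) (hu i) (hgc i) s t hs 1
        (fun τ _ => (hglt τ i).le)
      have hCs : |r s i| ≤ C := le_trans (norm_le_pi_norm (r s) i) (hC s)
      have hE : 0 < Real.exp (γ * (s - t)) := Real.exp_pos _
      nlinarith
    have htend : Filter.Tendsto (fun s => 1 + Real.exp (γ * (s - t)) * (C - 1))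
        Filter.atBot (nhds 1) := by
      have h1 : Filter.Tendsto (fun s : ℝ => γ * (s - t)) Filter.atBot Filter.atBot := by
        apply Filter.Tendsto.const_mul_atBot hγ
        exact Filter.tendsto_atBot_add_const_right _ _ Filter.tendsto_id
      have h2 : Filter.Tendsto (fun s => Real.exp (γ * (s - t))) Filter.atBot (nhds 0) :=
        Real.tendsto_exp_atBot.comp h1
      have := (h2.mul_const (C - 1)).const_add 1
      simpa using this
    exact ge_of_tendsto htend (Filter.eventually_atBot.mpr ⟨t, hbd⟩)
  -- Step 2: strict inequality via compactness on [t-1, t]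
  intro t i
  obtain ⟨τ₀, hτ₀, hmax⟩ := (isCompact_Icc (a := t - 1) (b := t)).exists_isMaxOn
    (Set.nonempty_Icc.mpr (by linarith)) ((hgc i).abs.continuousOn)
  set m := |g τ₀ i| with hm
  have hmlt : m < 1 := hglt τ₀ i
  have h := key_bound γ hγ (fun t => r t i) (fun t => g t i) (hu i) (hgc i) (t - 1) t
    (by linarith) m (fun τ hτ => hmax hτ)
  have hE : Real.exp (γ * (t - 1 - t)) < 1 := by
    rw [Real.exp_lt_one_iff]; nlinarith
  have hE0 : 0 < Real.exp (γ * (t - 1 - t)) := Real.exp_pos _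
  have hprev : |r (t - 1) i| ≤ 1 := step1 (t - 1) i
  nlinarith
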